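/- arXiv:1208.2124 — 2 statements merged into one kernel-verified Lean document; each statement's English description precedes it below -/
import Mathlib

section
/- Let G be a finite group acting ergodically on a von Neumann algebra 𝔄 via a unitary representation U. Then there exists a finite family p_1, …, p_n of minimal projections of 𝔄 that are pairwise orthogonal (p_i p_j = 0 for i ≠ j) and satisfy p_1 + p_2 + ⋯ + p_n = 1 (the identity operator on H). -/
variable {H : Type*} [NormedAddCommGroup H] [InnerProductSpace ℂ H] [CompleteSpace H]

/-- A projection on a Hilbert space: a self-adjoint idempotent bounded operator. -/
def IsProjectionCLM (p : H →L[ℂ] H) : Prop := IsSelfAdjoint p ∧ IsIdempotentElem p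

/-- A minimal projection of a von Neumann algebra `𝔄`: a nonzero projection `p ∈ 𝔄` such that
every projection `e ∈ 𝔄` whose range is contained in the range of `p` is `0` or `p`. -/
def IsMinimalProjectionIn (𝔄 : VonNeumannAlgebra H) (p : H →L[ℂ] H) : Prop :=
  IsProjectionCLM p ∧ p ∈ 𝔄 ∧ p ≠ 0 ∧
    ∀ e : H →L[ℂ] H, IsProjectionCLM e → e ∈ 𝔄 →
      LinearMap.range (e : H →ₗ[ℂ] H) ≤ LinearMap.range (p : H →ₗ[ℂ] H) → e = 0 ∨ e = p

/-!
For a projection `p ∈ 𝔄`, the sum `∑ s, U s * p * star (U s)` is `G`-invariant, hence a scalar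
`c • 1` by ergodicity; testing it against a unit vector in the range of `p` gives `1 ≤ re c`
whenever `p ≠ 0`. Testing instead against one fixed unit vector `u` turns this into an additive
`τ` that is `≥ 1` on every nonzero projection of `𝔄`. A projection `q ∈ 𝔄` that is not minimal
is the sum of two nonzero orthogonal projections of `𝔄`, each with `τ` smaller by at least `1`,
so induction on a bound for `τ q` decomposes `q`, in particular `1`.
-/

open ContinuousLinearMap
open scoped InnerProductSpace

lemma isProjectionCLM_iff {p : H →L[ℂ] H} : IsProjectionCLM p ↔ IsStarProjection p :=
  ⟨fun h => ⟨h.2, h.1⟩, fun h => ⟨h.2, h.1⟩⟩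

lemma IsIdempotentElem.mul_eq_right_iff_range_le {R M : Type*} [Semiring R] [AddCommMonoid M]
    [TopologicalSpace M] [Module R M] {p e : M →L[R] M} (hp : IsIdempotentElem p) :
    p * e = e ↔ LinearMap.range (e : M →ₗ[R] M) ≤ LinearMap.range (p : M →ₗ[R] M) := by
  rw [← LinearMap.IsIdempotentElem.comp_eq_right_iff hp.toLinearMap,
    ← toLinearMap_comp, ContinuousLinearMap.coe_inj]
  rfl

lemma isMinimalProjectionIn_iff {𝔄 : VonNeumannAlgebra H} {p : H →L[ℂ] H} :
    IsMinimalProjectionIn 𝔄 p ↔ IsStarProjection p ∧ p ∈ 𝔄 ∧ p ≠ 0 ∧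
      ∀ e, IsStarProjection e → e ∈ 𝔄 → p * e = e → e = 0 ∨ e = p := by
  simp only [IsMinimalProjectionIn, isProjectionCLM_iff]
  refine and_congr_right fun hp => Iff.rfl.and <| Iff.rfl.and <| forall_congr' fun e => ?_
  rw [hp.isIdempotentElem.mul_eq_right_iff_range_le]

lemma IsStarProjection.exists_norm_eq_one_apply_eq {p : H →L[ℂ] H} (hp : IsStarProjection p)
    (hp0 : p ≠ 0) : ∃ x : H, ‖x‖ = 1 ∧ p x = x := by
  obtain ⟨v, hv⟩ : ∃ v, p v ≠ 0 := by
    by_contra! h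
    exact hp0 (ext h)
  refine ⟨‖p v‖⁻¹ • p v, by simp [norm_smul, hv], ?_⟩
  rw [map_smul_of_tower, show p (p v) = p v from congr($(hp.isIdempotentElem.eq) v)]

lemma IsMinimalProjectionIn.isStarProjection {𝔄 : VonNeumannAlgebra H} {p : H →L[ℂ] H}
    (hp : IsMinimalProjectionIn 𝔄 p) : IsStarProjection p :=
  isProjectionCLM_iff.mp hp.1

section ConjSum

variable {G R : Type*} [Group G] [Fintype G] [Semiring R] [StarMul R]

def conjSum (U : G →* unitary R) (T : R) : R := ∑ s, (U s : R) * T * star (U s : R)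

lemma conjSum_add (U : G →* unitary R) (S T : R) :
    conjSum U (S + T) = conjSum U S + conjSum U T := by
  simp only [conjSum, mul_add, add_mul, Finset.sum_add_distrib]

lemma conj_conjSum (U : G →* unitary R) (T : R) (t : G) :
    (U t : R) * conjSum U T * star (U t : R) = conjSum U T := by
  simp only [conjSum, Finset.mul_sum, Finset.sum_mul]
  refine Fintype.sum_equiv (Equiv.mulLeft t) _ _ fun s => ?_
  simp only [Equiv.coe_mulLeft, map_mul, Submonoid.coe_mul, star_mul, mul_assoc]

end ConjSum

section Ergodic

variable {G : Type*} [Group G] [Fintype G]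

lemma exists_conjSum_eq_smul_one {𝔄 : VonNeumannAlgebra H} {U : G →* unitary (H →L[ℂ] H)}
    (hinv : ∀ T ∈ 𝔄, ∀ s : G, (U s : H →L[ℂ] H) * T * star (U s : H →L[ℂ] H) ∈ 𝔄)
    (herg : ∀ T ∈ 𝔄, (∀ s : G, (U s : H →L[ℂ] H) * T * star (U s : H →L[ℂ] H) = T) →
      ∃ c : ℂ, T = c • (1 : H →L[ℂ] H))
    {T : H →L[ℂ] H} (hT : T ∈ 𝔄) : ∃ c : ℂ, conjSum U T = c • 1 :=
  herg _ (sum_mem fun s _ => hinv T hT s) (conj_conjSum U T)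

lemma inner_conjSum_apply_self (U : G →* unitary (H →L[ℂ] H)) (T : H →L[ℂ] H) (x : H) :
    ⟪conjSum U T x, x⟫_ℂ =
      ∑ s, ⟪T (star (U s : H →L[ℂ] H) x), star (U s : H →L[ℂ] H) x⟫_ℂ := by
  simp only [conjSum, sum_apply, sum_inner]
  refine Finset.sum_congr rfl fun s _ => ?_
  rw [star_eq_adjoint]
  exact (adjoint_inner_right (U s : H →L[ℂ] H) _ _).symm

lemma re_inner_le_re_inner_conjSum (U : G →* unitary (H →L[ℂ] H)) {T : H →L[ℂ] H}
    (hT : T.IsPositive) (x : H) : (⟪T x, x⟫_ℂ).re ≤ (⟪conjSum U T x, x⟫_ℂ).re := by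
  set y : G → H := fun s => star (U s : H →L[ℂ] H) x
  calc (⟪T x, x⟫_ℂ).re = (⟪T (y 1), y 1⟫_ℂ).re := by simp [y]
    _ ≤ ∑ s, (⟪T (y s), y s⟫_ℂ).re :=
      Finset.single_le_sum (fun s _ => hT.re_inner_nonneg_left (y s)) (Finset.mem_univ 1)
    _ = (⟪conjSum U T x, x⟫_ℂ).re := by rw [inner_conjSum_apply_self, Complex.re_sum]

lemma one_le_re_inner_conjSum (U : G →* unitary (H →L[ℂ] H)) {p : H →L[ℂ] H}
    (hp : IsStarProjection p) (hp0 : p ≠ 0) (hc : ∃ c : ℂ, conjSum U p = c • 1) {u : H}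
    (hu : ‖u‖ = 1) : 1 ≤ (⟪conjSum U p u, u⟫_ℂ).re := by
  obtain ⟨c, hc⟩ := hc
  have hscalar : ∀ y : H, ‖y‖ = 1 → ⟪conjSum U p y, y⟫_ℂ = star c := fun y hy => by
    simp [hc, inner_self_eq_norm_sq_to_K, hy]
  obtain ⟨x, hx, hpx⟩ := hp.exists_norm_eq_one_apply_eq hp0
  calc 1 = (⟪p x, x⟫_ℂ).re := by simp [hpx, inner_self_eq_norm_sq_to_K, hx]
    _ ≤ (⟪conjSum U p x, x⟫_ℂ).re := re_inner_le_re_inner_conjSum U (.of_isStarProjection hp) x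
    _ = (⟪conjSum U p u, u⟫_ℂ).re := by rw [hscalar x hx, hscalar u hu]

lemma exists_addMonoidHom_one_le_of_conjSum_eq_smul_one {𝔄 : VonNeumannAlgebra H}
    (U : G →* unitary (H →L[ℂ] H))
    (hc : ∀ p, IsStarProjection p → p ∈ 𝔄 → ∃ c : ℂ, conjSum U p = c • 1) :
    ∃ τ : (H →L[ℂ] H) →+ ℝ, ∀ p, IsStarProjection p → p ∈ 𝔄 → p ≠ 0 → 1 ≤ τ p := by
  by_cases hH : ∃ u : H, ‖u‖ = 1
  · obtain ⟨u, hu⟩ := hH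
    refine ⟨AddMonoidHom.mk' (fun T => (⟪conjSum U T u, u⟫_ℂ).re) fun S T => ?_,
      fun p hp hp𝔄 hp0 => one_le_re_inner_conjSum U hp hp0 (hc p hp hp𝔄) hu⟩
    simp only [conjSum_add, add_apply, inner_add_left, Complex.add_re]
  · refine ⟨0, fun p hp _ hp0 => absurd ?_ hH⟩
    obtain ⟨x, hx, -⟩ := hp.exists_norm_eq_one_apply_eq hp0
    exact ⟨x, hx⟩

end Ergodic

section Decomposition

variable {𝔄 : VonNeumannAlgebra H}

structure IsOrthogonalMinimalDecomposition (𝔄 : VonNeumannAlgebra H)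
    (s : Finset (H →L[ℂ] H)) (q : H →L[ℂ] H) : Prop where
  minimal : ∀ p ∈ s, IsMinimalProjectionIn 𝔄 p
  pairwise_mul_eq_zero : (s : Set (H →L[ℂ] H)).Pairwise fun p p' => p * p' = 0
  sum_eq : ∑ p ∈ s, p = q

namespace IsOrthogonalMinimalDecomposition

lemma empty : IsOrthogonalMinimalDecomposition 𝔄 ∅ 0 :=
  ⟨by simp, by simp, by simp⟩

lemma singleton {p : H →L[ℂ] H} (hp : IsMinimalProjectionIn 𝔄 p) :
    IsOrthogonalMinimalDecomposition 𝔄 {p} p :=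
  ⟨by simpa using hp, by simp, by simp⟩

lemma mul_eq_right {s : Finset (H →L[ℂ] H)} {q p : H →L[ℂ] H}
    (hs : IsOrthogonalMinimalDecomposition 𝔄 s q) (hp : p ∈ s) : q * p = p := by
  rw [← hs.sum_eq, Finset.sum_mul, Finset.sum_eq_single_of_mem p hp
    fun p' hp' hne => hs.pairwise_mul_eq_zero hp' hp hne]
  exact (hs.minimal p hp).isStarProjection.isIdempotentElem.eq

lemma mul_eq_left {s : Finset (H →L[ℂ] H)} {q p : H →L[ℂ] H}
    (hs : IsOrthogonalMinimalDecomposition 𝔄 s q) (hp : p ∈ s) : p * q = p := by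
  rw [← hs.sum_eq, Finset.mul_sum, Finset.sum_eq_single_of_mem p hp
    fun p' hp' hne => hs.pairwise_mul_eq_zero hp hp' hne.symm]
  exact (hs.minimal p hp).isStarProjection.isIdempotentElem.eq

lemma union [DecidableEq (H →L[ℂ] H)] {s t : Finset (H →L[ℂ] H)} {e f : H →L[ℂ] H}
    (hs : IsOrthogonalMinimalDecomposition 𝔄 s e) (ht : IsOrthogonalMinimalDecomposition 𝔄 t f)
    (hef : e * f = 0) : IsOrthogonalMinimalDecomposition 𝔄 (s ∪ t) (e + f) := by
  have hmin : ∀ p ∈ s ∪ t, IsMinimalProjectionIn 𝔄 p := fun p hp =>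
    (Finset.mem_union.mp hp).elim (hs.minimal p) (ht.minimal p)
  -- `p * p' = (p * e) * (f * p') = p * (e * f) * p'`
  have hcross : ∀ p ∈ s, ∀ p' ∈ t, p * p' = 0 := fun p hp p' hp' => by
    rw [← hs.mul_eq_left hp, ← ht.mul_eq_right hp', mul_assoc, ← mul_assoc e, hef, zero_mul,
      mul_zero]
  refine ⟨hmin, ?_, ?_⟩
  · rw [Finset.coe_union, Set.pairwise_union]
    refine ⟨hs.pairwise_mul_eq_zero, ht.pairwise_mul_eq_zero,
      fun p hp p' hp' _ => ⟨hcross p hp p' hp', ?_⟩⟩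
    simpa [star_mul, (hs.minimal p hp).isStarProjection.isSelfAdjoint.star_eq,
      (ht.minimal p' hp').isStarProjection.isSelfAdjoint.star_eq]
      using congrArg star (hcross p hp p' hp')
  · have hdisj : Disjoint s t := Finset.disjoint_left.mpr fun p hp hp' =>
      (hs.minimal p hp).2.2.1 <| by
        rw [← hcross p hp p hp', (hs.minimal p hp).isStarProjection.isIdempotentElem.eq]
    rw [Finset.sum_union hdisj, hs.sum_eq, ht.sum_eq]

end IsOrthogonalMinimalDecomposition

lemma exists_isOrthogonalMinimalDecomposition_of_one_le (τ : (H →L[ℂ] H) →+ ℝ)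
    (hτ : ∀ p, IsStarProjection p → p ∈ 𝔄 → p ≠ 0 → 1 ≤ τ p) {q : H →L[ℂ] H}
    (hq : IsStarProjection q) (hq𝔄 : q ∈ 𝔄) : ∃ s, IsOrthogonalMinimalDecomposition 𝔄 s q := by
  classical
  rcases eq_or_ne q 0 with rfl | hq0
  · exact ⟨∅, .empty⟩
  obtain ⟨n, hn⟩ := exists_nat_ge (τ q)
  induction n generalizing q with
  | zero =>
    have := hτ q hq hq𝔄 hq0
    push_cast at hn
    linarith
  | succ n ih =>
    by_cases hmin : IsMinimalProjectionIn 𝔄 q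
    · exact ⟨{q}, .singleton hmin⟩
    obtain ⟨e, he, he𝔄, hqe, he0, heq⟩ : ∃ e, IsStarProjection e ∧ e ∈ 𝔄 ∧ q * e = e ∧
        e ≠ 0 ∧ e ≠ q := by
      simpa [isMinimalProjectionIn_iff, hq, hq𝔄, hq0] using hmin
    have hsub : IsStarProjection (q - e) := he.sub_of_mul_eq_right hq hqe
    have hsub0 : q - e ≠ 0 := sub_ne_zero.mpr heq.symm
    have hτq : τ q = τ e + τ (q - e) := by rw [← map_add, add_sub_cancel]
    have heτ := hτ e he he𝔄 he0
    have hsubτ := hτ (q - e) hsub (sub_mem hq𝔄 he𝔄) hsub0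
    push_cast at hn
    obtain ⟨s, hs⟩ := ih he he𝔄 he0 (by linarith)
    obtain ⟨t, ht⟩ := ih hsub (sub_mem hq𝔄 he𝔄) hsub0 (by linarith)
    have heq_left : e * q = e := by
      simpa [star_mul, he.isSelfAdjoint.star_eq, hq.isSelfAdjoint.star_eq]
        using congrArg star hqe
    refine ⟨s ∪ t, add_sub_cancel e q ▸ hs.union ht ?_⟩
    rw [mul_sub, heq_left, he.isIdempotentElem.eq, sub_self]

lemma IsOrthogonalMinimalDecomposition.exists_fin {s : Finset (H →L[ℂ] H)} {q : H →L[ℂ] H}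
    (hs : IsOrthogonalMinimalDecomposition 𝔄 s q) :
    ∃ (n : ℕ) (p : Fin n → (H →L[ℂ] H)), (∀ i, IsMinimalProjectionIn 𝔄 (p i)) ∧
      (∀ i j, i ≠ j → p i * p j = 0) ∧ ∑ i, p i = q := by
  refine ⟨s.card, fun i => s.equivFin.symm i, fun i => hs.minimal _ (s.equivFin.symm i).2,
    fun i j hij => hs.pairwise_mul_eq_zero (s.equivFin.symm i).2 (s.equivFin.symm j).2 ?_, ?_⟩
  · exact fun h => hij (s.equivFin.symm.injective (Subtype.ext h))
  · rw [← hs.sum_eq, ← Finset.sum_coe_sort s, ← s.equivFin.symm.sum_comp]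

end Decomposition

/-- If a finite group `G` acts ergodically on a von Neumann algebra `𝔄` via a unitary
representation `U`, then there is a finite family of pairwise orthogonal minimal projections
of `𝔄` summing to the identity. -/
theorem ergodic_finite_group_action_gives_minimal_projection_decomposition
    {G : Type*} [Group G] [Fintype G]
    (𝔄 : VonNeumannAlgebra H) (U : G →* unitary (H →L[ℂ] H))
    (hinv : ∀ T ∈ 𝔄, ∀ s : G,
      (U s : H →L[ℂ] H) * T * star (U s : H →L[ℂ] H) ∈ 𝔄)
    (herg : ∀ T ∈ 𝔄,
      (∀ s : G, (U s : H →L[ℂ] H) * T * star (U s : H →L[ℂ] H) = T) →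
      ∃ c : ℂ, T = c • (1 : H →L[ℂ] H)) :
    ∃ (n : ℕ) (p : Fin n → (H →L[ℂ] H)),
      (∀ i, IsMinimalProjectionIn 𝔄 (p i)) ∧
      (∀ i j, i ≠ j → p i * p j = 0) ∧
      (∑ i, p i) = 1 := by
  obtain ⟨τ, hτ⟩ := exists_addMonoidHom_one_le_of_conjSum_eq_smul_one U
    fun p _ hp𝔄 => exists_conjSum_eq_smul_one hinv herg hp𝔄
  obtain ⟨s, hs⟩ := exists_isOrthogonalMinimalDecomposition_of_one_le τ hτ
    (IsStarProjection.one _) (one_mem 𝔄)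
  exact hs.exists_fin
end

section
/- Let (π, U) be an irreducible covariant representation of the dynamical system (A, G, σ) on a complex Hilbert space H, where G is a finite group, irreducibility meaning that every bounded operator T on H satisfying T π(a) = π(a) T for all a ∈ A and T U(s) = U(s) T for all s ∈ G is a scalar multiple of the identity. Then H decomposes as a finite orthogonal direct sum of closed subspaces K_1, …, K_n (i.e. the K_i are pairwise orthogonal and their supremum is all of H) such that each K_i is invariant under π(a) for every a ∈ A, each K_i is nonzero, and the restriction of π to each K_i is irreducible: every closed subspace of K_i invariant under all π(a) equals {0} or K_i. -/
variable {H : Type*} [NormedAddCommGroup H] [InnerProductSpace ℂ H] [CompleteSpace H]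
variable {A : Type*} [NormedRing A] [StarRing A] [CStarRing A] [NormedAlgebra ℂ A]
  [CompleteSpace A] [StarModule ℂ A]

/-!
For a closed `π`-invariant subspace `K` with projection `P_K`, the operator
`∑ g, U g * P_K * star (U g)` commutes with every `U h`, and also with every `π a`: `P_K` commutes
with `π` because `K` and `Kᗮ` are invariant, and conjugation by `U g` permutes the `π a` by
covariance. By irreducibility it is a scalar `c_K`. This scalar is additive along
`K = L ⊔ (Lᗮ ⊓ K)` and is at least `1` when `K ≠ ⊥`, since the term `g = 1` alone dominates
`P_K`. So splitting a reducible invariant subspace lowers `c` by at least `1`, and repeatedly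
splitting `H` ends in finitely many irreducible pieces.
-/

open RCLike Submodule
open scoped InnerProductSpace

section UnitaryConjSum

variable {R : Type*} [Semiring R] [StarMul R] {G : Type*} [Group G]

theorem Commute.conj_of_mem_unitary {u T x : R} (hu : u ∈ unitary R)
    (h : Commute T (star u * x * u)) : Commute (u * T * star u) x :=
  calc u * T * star u * x = u * (T * (star u * x * u)) * star u := by
        simp only [mul_assoc, Unitary.mul_star_self_of_mem hu, mul_one]
    _ = u * (star u * x * u * T) * star u := by rw [h.eq]
    _ = x * (u * T * star u) := by
        simp only [← mul_assoc, Unitary.mul_star_self_of_mem hu, one_mul]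

theorem coe_unitary_hom_inv (U : G →* unitary R) (g : G) :
    (U g⁻¹ : R) = star (U g : R) := by
  rw [← Unitary.coe_star, Unitary.star_eq_inv, map_inv]

variable [Fintype G]

def unitaryConjSum (U : G →* unitary R) (T : R) : R :=
  ∑ g, (U g : R) * T * star (U g : R)

theorem unitaryConjSum_add (U : G →* unitary R) (T T' : R) :
    unitaryConjSum U (T + T') = unitaryConjSum U T + unitaryConjSum U T' := by
  simp only [unitaryConjSum, mul_add, add_mul, Finset.sum_add_distrib]

theorem commute_unitaryConjSum {S : Type*} (U : G →* unitary R) (f : S → R) (σ : G → S → S)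
    (hcov : ∀ g s, (U g : R) * f s * star (U g : R) = f (σ g s)) {T : R}
    (hT : ∀ s, Commute T (f s)) (s : S) : Commute (unitaryConjSum U T) (f s) :=
  Commute.sum_left _ _ _ fun g _ => Commute.conj_of_mem_unitary (U g).prop <| by
    have h := hcov g⁻¹ s
    rw [coe_unitary_hom_inv, star_star] at h
    exact h ▸ hT _

theorem unitaryConjSum_commute_unitary (U : G →* unitary R) (T : R) (h : G) :
    Commute (unitaryConjSum U T) (U h) := by
  have hshift : ∀ g, (U (h * g) : R) * T * star (U (h * g) : R) * U h
      = U h * ((U g : R) * T * star (U g : R)) := by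
    intro g
    simp only [map_mul, Submonoid.coe_mul, star_mul, mul_assoc, Unitary.coe_star_mul_self, mul_one]
  simp only [Commute, SemiconjBy, unitaryConjSum, Finset.sum_mul, Finset.mul_sum]
  calc _ = ∑ g, (U (h * g) : R) * T * star (U (h * g) : R) * U h :=
        (Fintype.sum_equiv (Equiv.mulLeft h) _ _ fun _ => rfl).symm
    _ = _ := Finset.sum_congr rfl fun g _ => hshift g

end UnitaryConjSum

theorem le_unitaryConjSum {R : Type*} [Semiring R] [PartialOrder R] [StarRing R]
    [StarOrderedRing R] {G : Type*} [Group G] [Fintype G] (U : G →* unitary R) {T : R}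
    (hT : 0 ≤ T) : T ≤ unitaryConjSum U T := by
  calc T = (U 1 : R) * T * star (U 1 : R) := by simp
    _ ≤ unitaryConjSum U T :=
      Finset.single_le_sum (f := fun g => (U g : R) * T * star (U g : R))
        (fun g _ => star_right_conjugate_nonneg hT _) (Finset.mem_univ 1)

theorem Minimal.eq_bot_or_eq_of_le {α : Type*} [PartialOrder α] [OrderBot α] {p : α → Prop}
    {M L : α} (hM : Minimal (fun M => p M ∧ M ≠ ⊥) M) (hL : p L) (hLM : L ≤ M) :
    L = ⊥ ∨ L = M :=
  or_iff_not_imp_left.mpr fun hL0 => le_antisymm hLM (hM.2 ⟨hL, hL0⟩ hLM)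

section Projection

variable {𝕜 E : Type*} [RCLike 𝕜] [NormedAddCommGroup E] [InnerProductSpace 𝕜 E]

theorem Submodule.starProjection_eq_add_of_le {L K : Submodule 𝕜 E} [L.HasOrthogonalProjection]
    [K.HasOrthogonalProjection] [(Lᗮ ⊓ K).HasOrthogonalProjection] (h : L ≤ K) :
    K.starProjection = L.starProjection + (Lᗮ ⊓ K).starProjection := by
  ext x
  have hL' : Lᗮ ⊓ K ≤ Lᗮ := inf_le_left
  have hL : L ≤ (Lᗮ ⊓ K)ᗮ := L.le_orthogonal_orthogonal.trans (orthogonal_le hL')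
  have hK : Lᗮ ⊓ (Lᗮ ⊓ K)ᗮ ≤ Kᗮ := by
    rw [inf_orthogonal, sup_orthogonal_inf_of_hasOrthogonalProjection h]
  rw [add_apply]
  refine eq_starProjection_of_mem_orthogonal (K.add_mem (h (L.starProjection_apply_mem x))
    (inf_le_right (a := Lᗮ) (starProjection_apply_mem _ x))) (hK ?_)
  rw [sub_add_eq_sub_sub]
  refine ⟨sub_mem (sub_starProjection_mem_orthogonal x) (hL' (starProjection_apply_mem _ x)), ?_⟩
  rw [sub_right_comm]
  exact sub_mem (sub_starProjection_mem_orthogonal x) (hL (L.starProjection_apply_mem x))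

theorem Submodule.one_le_re_of_starProjection_le_smul_one {K : Submodule 𝕜 E}
    [K.HasOrthogonalProjection] (hK : K ≠ ⊥) {c : 𝕜} (h : K.starProjection ≤ c • 1) :
    1 ≤ re c := by
  obtain ⟨x, hxK, hx0⟩ := K.ne_bot_iff.mp hK
  have hx : 0 < ‖x‖ ^ 2 := by positivity
  have hpos := (ContinuousLinearMap.le_def _ _).mp h |>.re_inner_nonneg_left x
  simp only [sub_apply, smul_apply, one_apply_eq_self, (starProjection_eq_self_iff).mpr hxK,
    inner_sub_left, inner_smul_left, inner_self_eq_norm_sq_to_K, map_sub, ← ofReal_pow,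
    re_mul_ofReal, conj_re, ofReal_re] at hpos
  nlinarith

variable [CompleteSpace E] {S : Type*} [Semiring S] [Algebra 𝕜 S] [Star S]

theorem StarAlgHom.apply_mem_orthogonal (π : S →⋆ₐ[𝕜] (E →L[𝕜] E)) {K : Submodule 𝕜 E}
    (hK : ∀ a, ∀ x ∈ K, π a x ∈ K) (a : S) : ∀ x ∈ Kᗮ, π a x ∈ Kᗮ := by
  have hKadj : K ∈ Module.End.invtSubmodule (ContinuousLinearMap.adjoint (π a)) := by
    rw [← ContinuousLinearMap.star_eq_adjoint, ← map_star,
      Module.End.mem_invtSubmodule_iff_forall_mem_of_mem]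
    exact hK (star a)
  exact (Module.End.mem_invtSubmodule_iff_forall_mem_of_mem _).mp
    (ContinuousLinearMap.orthogonal_mem_invtSubmodule hKadj)

theorem StarAlgHom.commute_starProjection (π : S →⋆ₐ[𝕜] (E →L[𝕜] E)) {K : Submodule 𝕜 E}
    [K.HasOrthogonalProjection] (hK : ∀ a, ∀ x ∈ K, π a x ∈ K) (a : S) :
    Commute K.starProjection (π a) := by
  refine (ContinuousLinearMap.IsIdempotentElem.commute_iff
    K.isIdempotentElem_starProjection).mpr ⟨?_, ?_⟩
  all_goals rw [Module.End.mem_invtSubmodule_iff_forall_mem_of_mem]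
  · simpa using hK a
  · simpa using π.apply_mem_orthogonal hK a

end Projection

section Decomposition

variable {𝕜 E : Type*} [RCLike 𝕜] [NormedAddCommGroup E] [InnerProductSpace 𝕜 E]

theorem Submodule.exists_finite_orthogonal_decomposition (p : Submodule 𝕜 E → Prop)
    (hp_proj : ∀ K, p K → K.HasOrthogonalProjection)
    (hp_compl : ∀ L K, p L → p K → L ≤ K → p (Lᗮ ⊓ K))
    (ψ : (E →L[𝕜] E) →+ ℝ)
    (hψ : ∀ K : Submodule 𝕜 E, [K.HasOrthogonalProjection] → p K → K ≠ ⊥ → 1 ≤ ψ K.starProjection)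
    {K : Submodule 𝕜 E} (hK : p K) :
    ∃ F : Set (Submodule 𝕜 E), F.Finite ∧ (∀ M ∈ F, Minimal (fun M => p M ∧ M ≠ ⊥) M) ∧
      F.Pairwise IsOrtho ∧ sSup F = K := by
  rcases eq_or_ne K ⊥ with rfl | hK0
  · exact ⟨∅, Set.finite_empty, by simp, Set.pairwise_empty _, sSup_empty⟩
  have := hp_proj K hK
  obtain ⟨n, hn⟩ := exists_nat_gt (ψ K.starProjection)
  induction n generalizing K with
  | zero => exact absurd (hψ K hK hK0) (by push_cast at hn; linarith)
  | succ n ih =>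
    by_cases hmin : Minimal (fun M => p M ∧ M ≠ ⊥) K
    · exact ⟨{K}, Set.finite_singleton K, by simpa, Set.pairwise_singleton _ _, sSup_singleton⟩
    obtain ⟨L, hLK, hL, hL0⟩ := (not_minimal_iff_exists_lt ⟨hK, hK0⟩).mp hmin
    have := hp_proj L hL
    have hL' : p (Lᗮ ⊓ K) := hp_compl L K hL hK hLK.le
    have := hp_proj _ hL'
    have hL'0 : Lᗮ ⊓ K ≠ ⊥ := fun h => hLK.ne <| by
      rw [← sup_orthogonal_inf_of_hasOrthogonalProjection hLK.le, h, sup_bot_eq]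
    have hsplit : ψ K.starProjection = ψ L.starProjection + ψ (Lᗮ ⊓ K).starProjection := by
      rw [starProjection_eq_add_of_le hLK.le, map_add]
    push_cast at hn
    obtain ⟨F₁, hF₁, hmin₁, hortho₁, hsup₁⟩ :=
      ih hL hL0 inferInstance (by linarith [hψ _ hL' hL'0])
    obtain ⟨F₂, hF₂, hmin₂, hortho₂, hsup₂⟩ :=
      ih hL' hL'0 inferInstance (by linarith [hψ _ hL hL0])
    have hcross : ∀ M ∈ F₁, ∀ N ∈ F₂, M ⟂ N := fun M hM N hN =>
      (isOrtho_orthogonal_right L).mono (hsup₁ ▸ le_sSup hM)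
        ((hsup₂ ▸ le_sSup hN).trans inf_le_left)
    refine ⟨F₁ ∪ F₂, hF₁.union hF₂, fun M hM => hM.elim (hmin₁ M) (hmin₂ M), ?_, ?_⟩
    · exact Set.pairwise_union.mpr ⟨hortho₁, hortho₂, fun M hM N hN _ =>
        ⟨hcross M hM N hN, (hcross M hM N hN).symm⟩⟩
    · rw [sSup_union, hsup₁, hsup₂, sup_orthogonal_inf_of_hasOrthogonalProjection hLK.le]

end Decomposition

section Covariant

variable {E : Type*} [NormedAddCommGroup E] [InnerProductSpace ℂ E] [CompleteSpace E]
  {S : Type*} [Semiring S] [Algebra ℂ S] [Star S] {G : Type*} [Group G] [Fintype G]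

theorem one_le_re_inner_unitaryConjSum_starProjection (σ : G → S → S)
    (π : S →⋆ₐ[ℂ] (E →L[ℂ] E)) (U : G →* unitary (E →L[ℂ] E))
    (hcov : ∀ g a, (U g : E →L[ℂ] E) * π a * star (U g : E →L[ℂ] E) = π (σ g a))
    (hirr : ∀ T : E →L[ℂ] E, (∀ a, T * π a = π a * T) →
      (∀ g, T * (U g : E →L[ℂ] E) = (U g : E →L[ℂ] E) * T) → ∃ c : ℂ, T = c • 1)
    {K : Submodule ℂ E} [K.HasOrthogonalProjection] (hK : ∀ a, ∀ x ∈ K, π a x ∈ K)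
    (hK0 : K ≠ ⊥) {ξ : E} (hξ : ‖ξ‖ = 1) :
    1 ≤ re ⟪ξ, unitaryConjSum U K.starProjection ξ⟫_ℂ := by
  obtain ⟨c, hc⟩ := hirr _
    (fun a => (commute_unitaryConjSum U π σ hcov (π.commute_starProjection hK) a).eq)
    (fun g => (unitaryConjSum_commute_unitary U _ g).eq)
  have hle : K.starProjection ≤ c • 1 :=
    hc ▸ le_unitaryConjSum U isStarProjection_starProjection.nonneg
  rw [hc]
  simpa [inner_smul_right, hξ] using K.one_le_re_of_starProjection_le_smul_one hK0 hle

end Covariant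

theorem irreducible_covariant_rep_finite_decomposition_general
    {G : Type*} [Group G] [Fintype G]
    (σ : G →* (A ≃ₐ[ℂ] A))
    (π : A →⋆ₐ[ℂ] (H →L[ℂ] H)) (U : G →* unitary (H →L[ℂ] H))
    (hcov : ∀ (g : G) (a : A),
      (U g : H →L[ℂ] H) * π a * star (U g : H →L[ℂ] H) = π (σ g a))
    (hirr : ∀ T : H →L[ℂ] H,
      (∀ a : A, T * π a = π a * T) →
      (∀ g : G, T * (U g : H →L[ℂ] H) = (U g : H →L[ℂ] H) * T) →
      ∃ c : ℂ, T = c • (1 : H →L[ℂ] H)) :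
    ∃ (n : ℕ) (K : Fin n → Submodule ℂ H),
      (∀ i, IsClosed (K i : Set H)) ∧
      (∀ i, K i ≠ ⊥) ∧
      (Pairwise fun i j => K i ≤ (K j)ᗮ) ∧
      (⨆ i, K i) = ⊤ ∧
      (∀ i, ∀ a : A, ∀ x ∈ K i, π a x ∈ K i) ∧
      (∀ i, ∀ L : Submodule ℂ H, IsClosed (L : Set H) → L ≤ K i →
        (∀ a : A, ∀ x ∈ L, π a x ∈ L) → L = ⊥ ∨ L = K i) := by
  rcases subsingleton_or_nontrivial H with hH | hH
  · exact ⟨0, finZeroElim, finZeroElim, finZeroElim, finZeroElim, Subsingleton.elim _ _,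
      finZeroElim, finZeroElim⟩
  obtain ⟨ξ, hξ⟩ := exists_norm_eq H zero_le_one
  let ψ : (H →L[ℂ] H) →+ ℝ :=
    { toFun := fun T => re ⟪ξ, unitaryConjSum U T ξ⟫_ℂ
      map_zero' := by simp [unitaryConjSum]
      map_add' := fun T T' => by simp [unitaryConjSum_add] }
  obtain ⟨F, hF, hmin, hortho, hsup⟩ := exists_finite_orthogonal_decomposition
    (fun K => IsClosed (K : Set H) ∧ ∀ a, ∀ x ∈ K, π a x ∈ K)
    (fun K hK => have := hK.1.completeSpace_coe; inferInstance)
    (fun L K hL hK _ => ⟨L.isClosed_orthogonal.inter hK.1,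
      fun a x hx => ⟨π.apply_mem_orthogonal hL.2 a x hx.1, hK.2 a x hx.2⟩⟩)
    ψ (fun _ _ hK hK0 => one_le_re_inner_unitaryConjSum_starProjection (fun g => σ g) π U
      hcov hirr hK.2 hK0 hξ)
    (K := ⊤) ⟨isClosed_univ, fun _ _ _ => trivial⟩
  obtain ⟨n, f, rfl⟩ := hF.fin_embedding
  refine ⟨n, f, fun i => (hmin _ ⟨i, rfl⟩).1.1.1, fun i => (hmin _ ⟨i, rfl⟩).1.2,
    fun i j hij => hortho ⟨i, rfl⟩ ⟨j, rfl⟩ (f.injective.ne hij), by rwa [← sSup_range],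
    fun i => (hmin _ ⟨i, rfl⟩).1.1.2,
    fun i L hL hLi hLinv => (hmin _ ⟨i, rfl⟩).eq_bot_or_eq_of_le ⟨hL, hLinv⟩ hLi⟩

/-- Let `(π, U)` be an irreducible covariant representation of the dynamical system
`(A, G, σ)` with `G` a finite group.  Then `H` is a finite orthogonal direct sum of nonzero
closed `π`-invariant subspaces on each of which `π` restricts to an irreducible
representation. -/
theorem irreducible_covariant_rep_finite_decomposition
    {G : Type*} [Group G] [Fintype G]
    (σ : G →* (A ≃ₐ[ℂ] A)) (hσstar : ∀ (g : G) (a : A), σ g (star a) = star (σ g a))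
    (π : A →⋆ₐ[ℂ] (H →L[ℂ] H)) (U : G →* unitary (H →L[ℂ] H))
    (hcov : ∀ (g : G) (a : A),
      (U g : H →L[ℂ] H) * π a * star (U g : H →L[ℂ] H) = π (σ g a))
    (hirr : ∀ T : H →L[ℂ] H,
      (∀ a : A, T * π a = π a * T) →
      (∀ g : G, T * (U g : H →L[ℂ] H) = (U g : H →L[ℂ] H) * T) →
      ∃ c : ℂ, T = c • (1 : H →L[ℂ] H)) :
    ∃ (n : ℕ) (K : Fin n → Submodule ℂ H),
      (∀ i, IsClosed (K i : Set H)) ∧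
      (∀ i, K i ≠ ⊥) ∧
      (Pairwise fun i j => K i ≤ (K j)ᗮ) ∧
      (⨆ i, K i) = ⊤ ∧
      (∀ i, ∀ a : A, ∀ x ∈ K i, π a x ∈ K i) ∧
      (∀ i, ∀ L : Submodule ℂ H, IsClosed (L : Set H) → L ≤ K i →
        (∀ a : A, ∀ x ∈ L, π a x ∈ L) → L = ⊥ ∨ L = K i) :=
  irreducible_covariant_rep_finite_decomposition_general σ π U hcov hirr
end
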